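/- (Upper bound of Proposition 2.) Let λ > 0 be real, and set r_lo = ⌊1/(√2·λ)⌋ and r_up = ⌈1/(√2·λ)⌉. Assume 1/(√2·λ) is not an integer (so r_lo < r_up) and assume 2·r_up·λ ≥ √3. Then ∑_{j=1}^{∞} v(j,λ) ≤ [if r_lo ≥ 1 then (w(r_lo,λ) − w(1,λ) + v(r_lo,λ)) else 0] + v(r_up,λ) − w(r_up,λ), where v(r,λ) = (4r²λ² − 1)·exp(−2r²λ²) and w(r,λ) = −r·exp(−2r²λ²). Consequently the Kuiper p-value KD = 2∑_{j=1}^∞ v(j,λ) satisfies KD ≤ 2·([if r_lo ≥ 1 then (w(r_lo,λ) − w(1,λ) + v(r_lo,λ)) else 0] + v(r_up,λ) − w(r_up,λ)). -/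

import Mathlib

/-- `v(r,λ) = (4r²λ² - 1)·exp(-2r²λ²)`. -/
noncomputable def v (r l : ℝ) : ℝ := (4 * r ^ 2 * l ^ 2 - 1) * Real.exp (-2 * r ^ 2 * l ^ 2)

/-- `w(r,λ) = -r·exp(-2r²λ²)`, an antiderivative of `v(·,λ)`. -/
noncomputable def w (r l : ℝ) : ℝ := -r * Real.exp (-2 * r ^ 2 * l ^ 2)

/-!
Since `w(·,λ)` is an antiderivative of `v(·,λ)`, the sum is compared with integrals of `v`.
As `r_lo < 1/(√2λ) < √3/(2λ) ≤ r_up = r_lo + 1`, the terms `j ≤ r_lo` lie where `v`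
increases, so `∑_{j<r_lo} v(j) ≤ ∫_1^{r_lo} v`, and the terms `j ≥ r_up` lie where `v`
decreases and is nonnegative, so `∑_{j>r_up} v(j) ≤ ∫_{r_up}^∞ v ≤ -w(r_up)` as `w ≤ 0` there.
-/

open Set

section SumIntegral

variable {f F : ℝ → ℝ} {a : ℝ}

theorem MonotoneOn.sum_range_succ_le_sub_add {n : ℕ}
    (hF : ∀ x ∈ Icc a (a + n), HasDerivAt F (f x) x)
    (hf : MonotoneOn f (Icc a (a + n))) :
    ∑ i ∈ Finset.range (n + 1), f (a + i) ≤ F (a + n) - F a + f (a + n) := by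
  rw [← uIcc_of_le (by simp)] at hF hf
  have hint := intervalIntegral.integral_eq_sub_of_hasDerivAt hF hf.intervalIntegrable
  rw [uIcc_of_le (by simp)] at hf
  rw [Finset.sum_range_succ, ← hint]
  gcongr
  exact hf.sum_le_integral

theorem AntitoneOn.sum_range_succ_le_add_sub {n : ℕ}
    (hF : ∀ x ∈ Icc a (a + n), HasDerivAt F (f x) x)
    (hf : AntitoneOn f (Icc a (a + n))) :
    ∑ i ∈ Finset.range (n + 1), f (a + i) ≤ f a + (F (a + n) - F a) := by
  rw [← uIcc_of_le (by simp)] at hF hf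
  have hint := intervalIntegral.integral_eq_sub_of_hasDerivAt hF hf.intervalIntegrable
  rw [uIcc_of_le (by simp)] at hf
  rw [Finset.sum_range_succ', Nat.cast_zero, add_zero, add_comm, ← hint]
  gcongr
  exact hf.sum_le_integral

theorem AntitoneOn.sum_range_le_sub (hF : ∀ x ∈ Ici a, HasDerivAt F (f x) x)
    (hf : AntitoneOn f (Ici a)) (hfa : 0 ≤ f a) (hF_nonpos : ∀ x ∈ Ici a, F x ≤ 0)
    (n : ℕ) :
    ∑ i ∈ Finset.range n, f (a + i) ≤ f a - F a := by
  cases n with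
  | zero => simpa using (hF_nonpos a self_mem_Ici).trans hfa
  | succ n =>
    have hsum := (hf.mono Icc_subset_Ici_self).sum_range_succ_le_add_sub (n := n)
      fun x hx ↦ hF x hx.1
    linarith [hF_nonpos (a + n) (by simp)]

end SumIntegral

section Kuiper

variable {l : ℝ}

theorem hasDerivAt_exp_neg_two_sq_mul_sq (l x : ℝ) :
    HasDerivAt (fun r : ℝ ↦ Real.exp (-2 * r ^ 2 * l ^ 2))
      (Real.exp (-2 * x ^ 2 * l ^ 2) * (-4 * x * l ^ 2)) x := by
  have h := (((hasDerivAt_pow 2 x).const_mul (-2)).mul_const (l ^ 2)).exp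
  refine h.congr_deriv ?_
  ring

theorem hasDerivAt_w (l x : ℝ) : HasDerivAt (fun r ↦ w r l) (v x l) x := by
  refine ((hasDerivAt_neg' x).mul (hasDerivAt_exp_neg_two_sq_mul_sq l x)).congr_deriv ?_
  rw [v]
  ring

theorem hasDerivAt_v (l x : ℝ) :
    HasDerivAt (fun r ↦ v r l)
      (4 * x * l ^ 2 * Real.exp (-2 * x ^ 2 * l ^ 2) * (3 - 4 * x ^ 2 * l ^ 2)) x := by
  have h := ((((hasDerivAt_pow 2 x).const_mul 4).mul_const (l ^ 2)).sub_const 1).mul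
    (hasDerivAt_exp_neg_two_sq_mul_sq l x)
  refine h.congr_deriv ?_
  ring

theorem le_sqrt_three_div_iff (hl : 0 < l) {x : ℝ} (hx : 0 ≤ x) :
    x ≤ √3 / (2 * l) ↔ 4 * x ^ 2 * l ^ 2 ≤ 3 := by
  rw [le_div_iff₀ (by positivity), Real.le_sqrt (by positivity) (by norm_num),
    show (x * (2 * l)) ^ 2 = 4 * x ^ 2 * l ^ 2 by ring]

theorem sqrt_three_div_le_iff (hl : 0 < l) {x : ℝ} (hx : 0 ≤ x) :
    √3 / (2 * l) ≤ x ↔ 3 ≤ 4 * x ^ 2 * l ^ 2 := by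
  rw [div_le_iff₀ (by positivity), Real.sqrt_le_left (by positivity),
    show (x * (2 * l)) ^ 2 = 4 * x ^ 2 * l ^ 2 by ring]

theorem v_monotoneOn (hl : 0 < l) : MonotoneOn (fun r ↦ v r l) (Icc 0 (√3 / (2 * l))) := by
  refine monotoneOn_of_hasDerivWithinAt_nonneg (convex_Icc _ _)
    (fun x _ ↦ (hasDerivAt_v l x).continuousAt.continuousWithinAt)
    (fun x _ ↦ (hasDerivAt_v l x).hasDerivWithinAt) fun x hx ↦ ?_
  rw [interior_Icc] at hx
  have hx3 := (le_sqrt_three_div_iff hl hx.1.le).1 hx.2.le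
  exact mul_nonneg (by have := hx.1; positivity) (by linarith)

theorem v_antitoneOn (hl : 0 < l) : AntitoneOn (fun r ↦ v r l) (Ici (√3 / (2 * l))) := by
  refine antitoneOn_of_hasDerivWithinAt_nonpos (convex_Ici _)
    (fun x _ ↦ (hasDerivAt_v l x).continuousAt.continuousWithinAt)
    (fun x _ ↦ (hasDerivAt_v l x).hasDerivWithinAt) fun x hx ↦ ?_
  rw [interior_Ici, mem_Ioi] at hx
  have hx0 : 0 < x := lt_of_le_of_lt (by positivity) hx
  have hx3 := (sqrt_three_div_le_iff hl hx0.le).1 hx.le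
  exact mul_nonpos_of_nonneg_of_nonpos (by positivity) (by linarith)

theorem v_nonneg (hl : 0 < l) {x : ℝ} (hx : √3 / (2 * l) ≤ x) : 0 ≤ v x l := by
  have hx3 := (sqrt_three_div_le_iff hl ((by positivity : 0 ≤ √3 / (2 * l)).trans hx)).1 hx
  exact mul_nonneg (by linarith) (Real.exp_pos _).le

theorem w_nonpos (l : ℝ) {x : ℝ} (hx : 0 ≤ x) : w x l ≤ 0 :=
  mul_nonpos_of_nonpos_of_nonneg (neg_nonpos.2 hx) (Real.exp_pos _).le

theorem sum_range_v_nat_add_one_le (hl : 0 < l) {n : ℕ} (hn : (n : ℝ) ≤ √3 / (2 * l)) :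
    ∑ j ∈ Finset.range n, v ((j : ℝ) + 1) l ≤
      if 1 ≤ n then w n l - w 1 l + v n l else 0 := by
  cases n with
  | zero => simp
  | succ m =>
    rw [if_pos (Nat.le_add_left 1 m)]
    have hmono : MonotoneOn (fun r ↦ v r l) (Icc 1 (1 + m)) :=
      (v_monotoneOn hl).mono (Icc_subset_Icc zero_le_one (by push_cast at hn; linarith))
    have h := hmono.sum_range_succ_le_sub_add fun x _ ↦ hasDerivAt_w l x
    simp only [add_comm (1 : ℝ)] at h
    push_cast
    linarith

theorem sum_range_v_add_le (hl : 0 < l) {a : ℝ} (ha : √3 / (2 * l) ≤ a) (n : ℕ) :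
    ∑ i ∈ Finset.range n, v (a + i) l ≤ v a l - w a l := by
  have ha0 : 0 ≤ a := (by positivity : 0 ≤ √3 / (2 * l)).trans ha
  exact ((v_antitoneOn hl).mono (Ici_subset_Ici.2 ha)).sum_range_le_sub
    (fun x _ ↦ hasDerivAt_w l x) (v_nonneg hl ha) (fun x hx ↦ w_nonpos l (ha0.trans hx)) n

end Kuiper

theorem Nat.ceil_eq_floor_add_one {R : Type*} [Semiring R] [LinearOrder R]
    [IsStrictOrderedRing R] [FloorSemiring R] {c : R} (hc : 0 ≤ c)
    (hc_nat : ∀ n : ℕ, (n : R) ≠ c) :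
    ⌈c⌉₊ = ⌊c⌋₊ + 1 :=
  le_antisymm (Nat.ceil_le_floor_add_one c) (Nat.lt_ceil.2 ((Nat.floor_le hc).lt_of_ne (hc_nat _)))

/-- Upper bound of Proposition 2: with `r_lo = ⌊1/(√2λ)⌋`, `r_up = ⌈1/(√2λ)⌉`,
`1/(√2λ)` not an integer and `2·r_up·λ ≥ √3`,
`∑_{j≥1} v(j,λ) ≤ [r_lo ≥ 1] (w(r_lo,λ) - w(1,λ) + v(r_lo,λ)) + v(r_up,λ) - w(r_up,λ)`,
and hence the Kuiper p-value `KD = 2∑_{j≥1} v(j,λ)` is at most twice the right-hand side. -/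
theorem stmt_15 (l : ℝ) (hl : 0 < l) (r_lo r_up : ℕ)
    (hlo : r_lo = ⌊1 / (Real.sqrt 2 * l)⌋₊)
    (hup : r_up = ⌈1 / (Real.sqrt 2 * l)⌉₊)
    (hnotint : ∀ n : ℕ, (n : ℝ) ≠ 1 / (Real.sqrt 2 * l))
    (h : Real.sqrt 3 ≤ 2 * r_up * l) :
    (∑' j : ℕ, v ((j : ℝ) + 1) l)
      ≤ (if 1 ≤ r_lo then w r_lo l - w 1 l + v r_lo l else 0) + v r_up l - w r_up l ∧
    2 * (∑' j : ℕ, v ((j : ℝ) + 1) l)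
      ≤ 2 * ((if 1 ≤ r_lo then w r_lo l - w 1 l + v r_lo l else 0) + v r_up l - w r_up l) := by
  have hc : 0 ≤ 1 / (√2 * l) := by positivity
  have hup_eq : r_up = r_lo + 1 := by
    rw [hlo, hup]
    exact Nat.ceil_eq_floor_add_one hc hnotint
  have hlo_le : (r_lo : ℝ) ≤ √3 / (2 * l) := calc
    (r_lo : ℝ) ≤ 1 / (√2 * l) := hlo ▸ Nat.floor_le hc
    _ = √2 / (2 * l) := by
      field_simp
      rw [Real.sq_sqrt zero_le_two]
    _ ≤ √3 / (2 * l) := by gcongr; norm_num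
  have hup_ge : √3 / (2 * l) ≤ r_up := by
    rw [div_le_iff₀ (by positivity)]
    linarith
  have htail_nonneg (i : ℕ) : 0 ≤ v (r_up + i) l := v_nonneg hl (hup_ge.trans (by simp))
  have htail := sum_range_v_add_le hl hup_ge
  have hshift : (fun i : ℕ ↦ v (↑(i + r_lo) + 1) l) = fun i : ℕ ↦ v (r_up + i) l := by
    ext i
    rw [hup_eq]
    push_cast
    ring_nf
  have hsum : Summable fun j : ℕ ↦ v ((j : ℝ) + 1) l := by
    rw [← summable_nat_add_iff r_lo, hshift]
    exact summable_of_sum_range_le htail_nonneg htail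
  have hbound : ∑' j : ℕ, v ((j : ℝ) + 1) l
      ≤ (if 1 ≤ r_lo then w r_lo l - w 1 l + v r_lo l else 0) + v r_up l - w r_up l := by
    rw [← hsum.sum_add_tsum_nat_add r_lo, hshift]
    linarith [sum_range_v_nat_add_one_le hl hlo_le, Real.tsum_le_of_sum_range_le htail_nonneg htail]
  exact ⟨hbound, by linarith⟩
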